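/- Let ω ∈ L¹(-1,1) with ω > 0 a.e., and let -1 = x₀ < ⋯ < x_N = 1. If a polynomial p of degree ≤ N-1 satisfies ∫_{x_{i-1}}^{x_i} p(t) ω(t) dt = 0 for all i = 1,…,N, then p = 0. -/

import Mathlib

/-!
Against a weight that is positive almost everywhere, a continuous function can have vanishing
integral over a cell only if it changes sign there, hence, by the intermediate value theorem, only
if it vanishes somewhere inside the cell. The `N` open cells are disjoint, so `p` has `N` distinct
roots, more than its degree allows.
-/

open MeasureTheory Set

theorem IsPreconnected.forall_pos_or_forall_neg {s : Set ℝ} {g : ℝ → ℝ} (hs : IsPreconnected s)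
    (hg : ContinuousOn g s) (hg0 : ∀ t ∈ s, g t ≠ 0) :
    (∀ t ∈ s, 0 < g t) ∨ ∀ t ∈ s, g t < 0 := by
  by_contra! ⟨⟨a, ha, hga⟩, b, hb, hgb⟩
  obtain ⟨c, hc, hgc⟩ := hs.intermediate_value ha hb hg ⟨hga, hgb⟩
  exact hg0 c hc hgc

theorem intervalIntegral_pos_of_ae_pos {f : ℝ → ℝ} {a b : ℝ} (hab : a < b)
    (hf : IntegrableOn f (Ioo a b)) (hpos : ∀ᵐ t ∂volume.restrict (Ioo a b), 0 < f t) :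
    0 < ∫ t in a..b, f t := by
  rw [intervalIntegral.integral_of_le hab.le, integral_Ioc_eq_integral_Ioo,
    integral_pos_iff_support_of_nonneg_ae (hpos.mono fun _ h => h.le) hf, pos_iff_ne_zero]
  intro h
  have : (ae (volume.restrict (Ioo a b))).NeBot := ae_restrict_neBot.2 (by simpa using hab)
  obtain ⟨t, ht, ht0⟩ := (hpos.and (measure_eq_zero_iff_ae_notMem.1 h)).exists
  exact ht0 ht.ne'

theorem exists_mem_Ioo_eq_zero_of_intervalIntegral_mul_eq_zero {g ω : ℝ → ℝ} {a b : ℝ}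
    (hab : a < b) (hg : ContinuousOn g (Icc a b)) (hω : IntegrableOn ω (Ioo a b))
    (hωpos : ∀ᵐ t ∂volume.restrict (Ioo a b), 0 < ω t)
    (h : ∫ t in a..b, g t * ω t = 0) : ∃ r ∈ Ioo a b, g r = 0 := by
  have hint : IntegrableOn (fun t => g t * ω t) (Ioo a b) :=
    (((integrableOn_Icc_iff_integrableOn_Ioo (f := ω)).2 hω).continuousOn_mul hg
      isCompact_Icc).mono_set Ioo_subset_Icc_self
  by_contra! hg0
  rcases isPreconnected_Ioo.forall_pos_or_forall_neg (hg.mono Ioo_subset_Icc_self) hg0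
    with hgpos | hgneg
  · refine (intervalIntegral_pos_of_ae_pos hab hint ?_).ne' h
    filter_upwards [hωpos, ae_restrict_mem measurableSet_Ioo] with t hωt ht
    exact mul_pos (hgpos t ht) hωt
  · refine (intervalIntegral_pos_of_ae_pos hab hint.neg ?_).ne' ?_
    · filter_upwards [hωpos, ae_restrict_mem measurableSet_Ioo] with t hωt ht
      simpa using mul_neg_of_neg_of_pos (hgneg t ht) hωt
    · simp [intervalIntegral.integral_neg, h]

theorem strictMono_of_mem_Ioo_castSucc_succ {α : Type*} [Preorder α] {N : ℕ}
    {x : Fin (N + 1) → α} (hx : Monotone x) {r : Fin N → α}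
    (hr : ∀ i, r i ∈ Ioo (x i.castSucc) (x i.succ)) : StrictMono r := fun i j hij =>
  calc r i < x i.succ := (hr i).2
    _ ≤ x j.castSucc := hx (Fin.succ_le_castSucc_iff.2 hij)
    _ < r j := (hr j).1

theorem weighted_histopolation_injective_general (N : ℕ)
    (x : Fin (N + 1) → ℝ) (hx : StrictMono x)
    (hx0 : x 0 = -1) (hxN : x (Fin.last N) = 1)
    (ω : ℝ → ℝ) (hω : IntegrableOn ω (Set.Ioo (-1 : ℝ) 1))
    (hpos : ∀ᵐ t ∂(volume.restrict (Set.Ioo (-1 : ℝ) 1)), 0 < ω t)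
    (p : Polynomial ℝ) (hdeg : p.degree < (N : WithBot ℕ))
    (hzero : ∀ i : Fin N, ∫ t in (x i.castSucc)..(x i.succ), p.eval t * ω t = 0) :
    p = 0 := by
  have hcell (i : Fin N) : Ioo (x i.castSucc) (x i.succ) ⊆ Ioo (-1) 1 := by
    rw [← hx0, ← hxN]
    exact Ioo_subset_Ioo (hx.monotone (Fin.zero_le _)) (hx.monotone (Fin.le_last _))
  have hroot (i : Fin N) : ∃ r ∈ Ioo (x i.castSucc) (x i.succ), p.eval r = 0 :=
    exists_mem_Ioo_eq_zero_of_intervalIntegral_mul_eq_zero (hx Fin.castSucc_lt_succ)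
      p.continuous.continuousOn (hω.mono_set (hcell i))
      (ae_restrict_of_ae_restrict_of_subset (hcell i) hpos) (hzero i)
  choose r hr hr0 using hroot
  refine Polynomial.eq_zero_of_degree_lt_of_eval_index_eq_zero (s := Finset.univ)
    (strictMono_of_mem_Ioo_castSucc_succ hx.monotone hr).injective.injOn ?_ fun i _ => hr0 i
  simpa using hdeg

/-- Injectivity step for weighted histopolation: if a polynomial of degree at most `N-1` has
vanishing weighted averages on each cell of a partition of `[-1,1]`, then it is zero. -/
theorem weighted_histopolation_injective (N : ℕ) (hN : 0 < N)
    (x : Fin (N + 1) → ℝ) (hx : StrictMono x)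
    (hx0 : x 0 = -1) (hxN : x (Fin.last N) = 1)
    (ω : ℝ → ℝ) (hω : IntegrableOn ω (Set.Ioo (-1 : ℝ) 1))
    (hpos : ∀ᵐ t ∂(volume.restrict (Set.Ioo (-1 : ℝ) 1)), 0 < ω t)
    (p : Polynomial ℝ) (hdeg : p.degree < (N : WithBot ℕ))
    (hzero : ∀ i : Fin N, ∫ t in (x i.castSucc)..(x i.succ), p.eval t * ω t = 0) :
    p = 0 :=
  weighted_histopolation_injective_general N x hx hx0 hxN ω hω hpos p hdeg hzero
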